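/- arXiv:1606.09065 — 6 statements merged into one kernel-verified Lean document; each statement's English description precedes it below -/
import Mathlib

section
/- The PSD rank of the n×n identity matrix equals n. -/
/-!
If `1 = (tr (B i * C j))` with all `B i`, `C j` positive semidefinite of size `k`, then
`tr (B i * C j) = 0` forces `B i * C j = 0` for `i ≠ j`, while `B i * C i ≠ 0`. Such a family
yields an `n × n` invertible diagonal matrix factoring through `ℝᵏ`, so `n ≤ k`; the factorization
by the diagonal matrix units attains `k = n`.
-/

open Matrix

noncomputable def PsdRank {α β : Type} [Fintype α] [Fintype β] (A : Matrix α β ℝ) : ℕ :=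
  sInf {k : ℕ | ∃ (B : α → Matrix (Fin k) (Fin k) ℝ) (C : β → Matrix (Fin k) (Fin k) ℝ),
    (∀ i, (B i).PosSemidef) ∧ (∀ j, (C j).PosSemidef) ∧ ∀ i j, A i j = ((B i) * (C j)).trace}

namespace Matrix

section PosSemidef

open scoped ComplexOrder MatrixOrder

variable {𝕜 ι : Type*} [RCLike 𝕜] [Fintype ι]

/-- Writing `B = Pᴴ P` and `C = Qᴴ Q`, `tr (B C) = tr ((P Qᴴ) (P Qᴴ)ᴴ)`, which vanishes only if
`P Qᴴ = 0`, and then `B C = Pᴴ (P Qᴴ) Q = 0`. -/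
theorem PosSemidef.mul_eq_zero_of_trace_mul_eq_zero {B C : Matrix ι ι 𝕜} (hB : B.PosSemidef)
    (hC : C.PosSemidef) (h : (B * C).trace = 0) : B * C = 0 := by
  classical
  obtain ⟨P, rfl⟩ := CStarAlgebra.nonneg_iff_eq_star_mul_self.mp hB.nonneg
  obtain ⟨Q, rfl⟩ := CStarAlgebra.nonneg_iff_eq_star_mul_self.mp hC.nonneg
  simp only [star_eq_conjTranspose] at h ⊢
  have hPQ : P * Qᴴ = 0 := by
    rw [← trace_mul_conjTranspose_self_eq_zero_iff, ← h, conjTranspose_mul,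
      conjTranspose_conjTranspose, Matrix.mul_assoc, trace_mul_comm, Matrix.mul_assoc,
      Matrix.mul_assoc, trace_mul_comm (Pᴴ * P), Matrix.mul_assoc]
  calc Pᴴ * P * (Qᴴ * Q) = Pᴴ * (P * Qᴴ) * Q := by simp only [Matrix.mul_assoc]
    _ = 0 := by rw [hPQ, Matrix.mul_zero, Matrix.zero_mul]

theorem PosSemidef.trace_mul_eq_zero_iff {B C : Matrix ι ι 𝕜} (hB : B.PosSemidef)
    (hC : C.PosSemidef) : (B * C).trace = 0 ↔ B * C = 0 :=
  ⟨hB.mul_eq_zero_of_trace_mul_eq_zero hC, fun h => h ▸ trace_zero ι 𝕜⟩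

end PosSemidef

/-- With `(p i, q i)` a nonzero entry of `B i * C i`, the rows `B i (p i)` and the columns
`C j · (q j)` multiply to an invertible diagonal matrix. -/
theorem card_le_card_of_mul_eq_zero_iff_ne {α ι R : Type*} [Fintype α] [Fintype ι] [Field R]
    {B C : α → Matrix ι ι R} (h : ∀ i j, B i * C j = 0 ↔ i ≠ j) :
    Fintype.card α ≤ Fintype.card ι := by
  classical
  have hentry : ∀ i, ∃ p q, (B i * C i) p q ≠ 0 := fun i => by
    by_contra! hzero
    exact (h i i).mp (Matrix.ext hzero) rfl
  choose p q hpq using hentry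
  let U : Matrix α ι R := of fun i r => B i (p i) r
  let V : Matrix ι α R := of fun r j => C j r (q j)
  have hUV : U * V = diagonal fun i => (B i * C i) (p i) (q i) := by
    ext i j
    change (B i * C j) (p i) (q j) = _
    rcases eq_or_ne i j with rfl | hij
    · rw [diagonal_apply_eq]
    · rw [(h i j).mpr hij, diagonal_apply_ne _ hij, zero_apply]
  calc Fintype.card α = (U * V).rank := by
        rw [hUV, rank_diagonal, Fintype.card_congr (Equiv.subtypeUnivEquiv hpq)]
    _ ≤ V.rank := rank_mul_le_right U V
    _ ≤ Fintype.card ι := rank_le_card_height V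

end Matrix

def IsPsdFactorization {α β ι : Type*} [Fintype ι] (A : Matrix α β ℝ) (B : α → Matrix ι ι ℝ)
    (C : β → Matrix ι ι ℝ) : Prop :=
  (∀ i, (B i).PosSemidef) ∧ (∀ j, (C j).PosSemidef) ∧ ∀ i j, A i j = (B i * C j).trace

namespace IsPsdFactorization

variable {α β : Type} {ι κ : Type*} [Fintype ι] [Fintype κ] {A : Matrix α β ℝ}
  {B : α → Matrix ι ι ℝ} {C : β → Matrix ι ι ℝ}

theorem reindex (h : IsPsdFactorization A B C) (e : ι ≃ κ) :
    IsPsdFactorization A (fun i => (B i).submatrix e.symm e.symm)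
      (fun j => (C j).submatrix e.symm e.symm) := by
  obtain ⟨hB, hC, hA⟩ := h
  refine ⟨fun i => (hB i).submatrix _, fun j => (hC j).submatrix _, fun i j => ?_⟩
  rw [hA, submatrix_mul_equiv]
  exact (e.symm.sum_comp _).symm

variable [Fintype α] [Fintype β]

theorem psdRank_le (h : IsPsdFactorization A B C) : PsdRank A ≤ Fintype.card ι := by
  classical
  exact Nat.sInf_le ⟨_, _, h.reindex (Fintype.equivFin ι)⟩

theorem exists_fin_psdRank (h : IsPsdFactorization A B C) :
    ∃ (B' : α → Matrix (Fin (PsdRank A)) (Fin (PsdRank A)) ℝ)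
      (C' : β → Matrix (Fin (PsdRank A)) (Fin (PsdRank A)) ℝ), IsPsdFactorization A B' C' := by
  classical
  exact Nat.sInf_mem (s := {k | ∃ (B' : α → Matrix (Fin k) (Fin k) ℝ)
    (C' : β → Matrix (Fin k) (Fin k) ℝ), IsPsdFactorization A B' C'})
    ⟨_, _, _, h.reindex (Fintype.equivFin ι)⟩

theorem card_le {A : Matrix α α ℝ} {B C : α → Matrix ι ι ℝ} (h : IsPsdFactorization A B C)
    (hA : ∀ i j, A i j = 0 ↔ i ≠ j) : Fintype.card α ≤ Fintype.card ι := by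
  obtain ⟨hB, hC, hBC⟩ := h
  refine card_le_card_of_mul_eq_zero_iff_ne (B := B) (C := C) fun i j => ?_
  rw [← (hB i).trace_mul_eq_zero_iff (hC j), ← hBC, hA]

end IsPsdFactorization

theorem isPsdFactorization_diagonal {α : Type*} [Fintype α] [DecidableEq α] {d : α → ℝ}
    (hd : ∀ i, 0 ≤ d i) :
    IsPsdFactorization (diagonal d) (fun i => diagonal (Pi.single i (d i)))
      (fun j => diagonal (Pi.single j 1)) := by
  refine ⟨fun i => posSemidef_diagonal_iff.mpr (Pi.single_nonneg (α := fun _ => ℝ) |>.mpr (hd i)),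
    fun j => posSemidef_diagonal_iff.mpr (Pi.single_nonneg (α := fun _ => ℝ) |>.mpr zero_le_one),
    fun i j => ?_⟩
  rw [diagonal_mul_diagonal, trace_diagonal]
  rcases eq_or_ne i j with rfl | hij
  · simp [Pi.single_apply]
  · simp [Pi.single_apply, hij, hij.symm]

theorem psdRank_diagonal {α : Type} [Fintype α] [DecidableEq α] {d : α → ℝ} (hd : ∀ i, 0 < d i) :
    PsdRank (diagonal d) = Fintype.card α := by
  have hfac := isPsdFactorization_diagonal fun i => (hd i).le
  obtain ⟨B, C, hmin⟩ := hfac.exists_fin_psdRank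
  refine le_antisymm hfac.psdRank_le ?_
  simpa using hmin.card_le fun i j => by simp [diagonal_apply, (hd i).ne']

theorem psdRank_identity (n : ℕ) : PsdRank (1 : Matrix (Fin n) (Fin n) ℝ) = n := by
  simpa using psdRank_diagonal fun _ : Fin n => one_pos
end

section
/- For any real matrix A, the PSD rank of the entrywise (Hadamard) square A∘A is at most the ordinary rank of A. -/
/-!
Factor `A = U * V` through `Fin A.rank`, so that `A i j = U i ⬝ᵥ Vᵀ j`. Then
`A i j ^ 2 = tr ((U i) (U i)ᵀ (Vᵀ j) (Vᵀ j)ᵀ)`, a factorization of `A ∘ A` by rank-one PSD matrices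
of size `A.rank`.
-/

open Matrix

theorem Matrix.exists_rank_factorization {K : Type*} [Field K] {m n : Type*} [Fintype n]
    (A : Matrix m n K) : ∃ (U : Matrix m (Fin A.rank) K) (V : Matrix (Fin A.rank) n K), U * V = A := by
  have : FiniteDimensional K (Submodule.span K (Set.range A.col)) :=
    FiniteDimensional.span_of_finite K (Set.finite_range _)
  let b := Module.finBasisOfFinrankEq K _ A.rank_eq_finrank_span_cols.symm
  have hcol (j : n) : A.col j ∈ Submodule.span K (Set.range A.col) := Submodule.subset_span ⟨j, rfl⟩
  refine ⟨of fun i k => (b k : m → K) i, of fun k j => b.repr ⟨A.col j, hcol j⟩ k, ?_⟩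
  ext i j
  have hexpand := congrArg (fun x : Submodule.span K (Set.range A.col) => (x : m → K) i)
    (b.sum_repr ⟨A.col j, hcol j⟩)
  simp only [Submodule.coe_sum, Submodule.coe_smul, Finset.sum_apply, Pi.smul_apply,
    smul_eq_mul] at hexpand
  rw [mul_apply, ← col_apply A j i, ← hexpand]
  exact Finset.sum_congr rfl fun k _ => mul_comm _ _

theorem Matrix.trace_vecMulVec_self_mul_vecMulVec_self {R k : Type*} [CommSemiring R] [Fintype k]
    (u v : k → R) : (vecMulVec u u * vecMulVec v v).trace = (u ⬝ᵥ v) ^ 2 := by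
  rw [vecMulVec_mul_vecMulVec, trace_vecMulVec, dotProduct_smul, smul_eq_mul, sq]

theorem Matrix.posSemidef_vecMulVec_self {k : Type*} [Fintype k] (u : k → ℝ) :
    (vecMulVec u u).PosSemidef := by
  simpa using posSemidef_vecMulVec_self_star u

theorem psdRank_hadamard_sq_mul_le {α β : Type} [Fintype α] [Fintype β] {k : ℕ}
    (U : Matrix α (Fin k) ℝ) (V : Matrix (Fin k) β ℝ) :
    PsdRank (Matrix.of fun i j => (U * V) i j ^ 2) ≤ k := by
  refine Nat.sInf_le ⟨fun i => vecMulVec (U i) (U i), fun j => vecMulVec (Vᵀ j) (Vᵀ j),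
    fun i => posSemidef_vecMulVec_self _, fun j => posSemidef_vecMulVec_self _, fun i j => ?_⟩
  rw [trace_vecMulVec_self_mul_vecMulVec_self, of_apply, mul_apply]
  rfl

theorem psdRank_hadamard_sq_le_rank {m n : ℕ} (A : Matrix (Fin m) (Fin n) ℝ) :
    PsdRank (Matrix.of fun i j => (A i j) ^ 2) ≤ A.rank := by
  obtain ⟨U, V, hUV⟩ := A.exists_rank_factorization
  simpa only [hUV] using psdRank_hadamard_sq_mul_le U V
end

section
/- For nonnegative matrices A, B, C of compatible sizes, the block matrix [[A, B], [0, C]] has PSD rank at least PSD rank(A) + PSD rank(C). -/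
/-!
Take a PSD factorization `M i j = tr (P i * Q j)` of `M = [[A, B], [0, C]]` of size
`k = psdRank M`, and let `V` be the sum of the ranges of the column factors `Q j` of the `A`-block.
For PSD matrices `tr (P * Q) = 0` forces `P * Q = 0`, so the zero block makes the ranges of the
row factors `P i` of the `C`-block orthogonal to `V`. Compressing a factorization to a subspace
containing the ranges of all factors on one side preserves the traces, hence
`psdRank A ≤ dim V` and `psdRank C ≤ dim Vᗮ = k - dim V`.
-/

open Matrix

section RCLike

open scoped ComplexOrder

variable {𝕜 : Type*} [RCLike 𝕜] {n m p : Type*} [Fintype n] [Fintype m] [Fintype p]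

open scoped MatrixOrder in
theorem Matrix.PosSemidef.trace_mul_eq_zero_iff_s3 {P Q : Matrix n n 𝕜} (hP : P.PosSemidef)
    (hQ : Q.PosSemidef) : (P * Q).trace = 0 ↔ P * Q = 0 := by
  classical
  refine ⟨fun h => ?_, fun h => by rw [h, trace_zero]⟩
  obtain ⟨X, rfl⟩ := CStarAlgebra.nonneg_iff_eq_star_mul_self.mp hP.nonneg
  obtain ⟨Y, rfl⟩ := CStarAlgebra.nonneg_iff_eq_star_mul_self.mp hQ.nonneg
  have hXY : X * star Y = 0 := by
    rw [← trace_conjTranspose_mul_self_eq_zero_iff, ← h]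
    simp only [star_eq_conjTranspose, conjTranspose_mul, conjTranspose_conjTranspose,
      Matrix.mul_assoc]
    rw [trace_mul_comm]
    simp only [Matrix.mul_assoc]
  rw [Matrix.mul_assoc, ← Matrix.mul_assoc X, hXY, Matrix.zero_mul, Matrix.mul_zero]

variable [DecidableEq n] [DecidableEq m] [DecidableEq p]

theorem Matrix.range_toEuclideanLin_isOrtho {A : Matrix m n 𝕜} {B : Matrix m p 𝕜}
    (h : Aᴴ * B = 0) :
    LinearMap.range (toEuclideanLin A) ⟂ LinearMap.range (toEuclideanLin B) := by
  rw [Submodule.isOrtho_iff_inner_eq]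
  rintro _ ⟨x, rfl⟩ _ ⟨y, rfl⟩
  rw [← LinearMap.adjoint_inner_right, ← toEuclideanLin_conjTranspose_eq_adjoint]
  simp [toLpLin_apply, mulVec_mulVec, h]

omit [Fintype m] [DecidableEq m] in
theorem Submodule.exists_conjTranspose_mul_self_eq_one_and_range_eq
    (V : Submodule 𝕜 (EuclideanSpace 𝕜 n)) :
    ∃ U : Matrix n (Fin (Module.finrank 𝕜 V)) 𝕜,
      Uᴴ * U = 1 ∧ LinearMap.range (toEuclideanLin U) = V := by
  let L := V.subtypeₗᵢ.comp (stdOrthonormalBasis 𝕜 V).repr.symm.toLinearIsometry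
  refine ⟨toEuclideanLin.symm L.toLinearMap, toEuclideanLin.injective ?_, ?_⟩
  · rw [toLpLin_mul, toEuclideanLin_conjTranspose_eq_adjoint, LinearEquiv.apply_symm_apply,
      LinearIsometry.adjoint_comp_self', toLpLin_one]
  · rw [LinearEquiv.apply_symm_apply]
    exact (LinearMap.range_comp_of_range_eq_top _ (LinearEquiv.range _)).trans V.range_subtype

omit [Fintype m] [DecidableEq n] [DecidableEq m] in
theorem Matrix.mul_conjTranspose_mul_eq_self_of_range_le {d : Type*} [Fintype d] [DecidableEq d]
    {U : Matrix n d 𝕜} {A : Matrix n p 𝕜} (hU : Uᴴ * U = 1)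
    (hA : LinearMap.range (toEuclideanLin A) ≤ LinearMap.range (toEuclideanLin U)) :
    U * Uᴴ * A = A := by
  refine toEuclideanLin.injective (LinearMap.ext fun x => ?_)
  obtain ⟨z, hz⟩ := hA ⟨x, rfl⟩
  have hAx : A *ᵥ x.ofLp = U *ᵥ z.ofLp := by
    rw [toLpLin_apply, toLpLin_apply] at hz
    exact WithLp.toLp_injective 2 hz.symm
  simp only [toLpLin_apply, ← mulVec_mulVec, hAx]
  rw [mulVec_mulVec, mulVec_mulVec, Matrix.mul_assoc, hU, Matrix.mul_one]

end RCLike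

structure IsPsdFactorization_s3 {α β : Type} {k : ℕ} (A : Matrix α β ℝ)
    (B : α → Matrix (Fin k) (Fin k) ℝ) (C : β → Matrix (Fin k) (Fin k) ℝ) : Prop where
  posSemidef_left : ∀ i, (B i).PosSemidef
  posSemidef_right : ∀ j, (C j).PosSemidef
  apply_eq_trace : ∀ i j, A i j = (B i * C j).trace

namespace IsPsdFactorization_s3

variable {α β : Type} {k : ℕ} {A : Matrix α β ℝ}
  {B : α → Matrix (Fin k) (Fin k) ℝ} {C : β → Matrix (Fin k) (Fin k) ℝ}

theorem transpose (h : IsPsdFactorization_s3 A B C) : IsPsdFactorization_s3 Aᵀ C B :=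
  ⟨h.2, h.1, fun j i => (h.3 i j).trans (trace_mul_comm _ _)⟩

theorem submatrix {α' β' : Type} (h : IsPsdFactorization_s3 A B C) (f : α' → α) (g : β' → β) :
    IsPsdFactorization_s3 (A.submatrix f g) (B ∘ f) (C ∘ g) :=
  ⟨fun i => h.1 (f i), fun j => h.2 (g j), fun i j => h.3 (f i) (g j)⟩

end IsPsdFactorization_s3

section PsdRank

variable {α β : Type} [Fintype α] [Fintype β]

theorem psdRank_eq_sInf (A : Matrix α β ℝ) :
    PsdRank A = sInf {k | ∃ B C, IsPsdFactorization_s3 (k := k) A B C} := by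
  unfold PsdRank
  congr 1
  ext k
  exact ⟨fun ⟨B, C, hB, hC, h⟩ => ⟨B, C, hB, hC, h⟩, fun ⟨B, C, h⟩ => ⟨B, C, h.1, h.2, h.3⟩⟩

theorem IsPsdFactorization_s3.psdRank_le {k : ℕ} {A : Matrix α β ℝ}
    {B : α → Matrix (Fin k) (Fin k) ℝ} {C : β → Matrix (Fin k) (Fin k) ℝ}
    (h : IsPsdFactorization_s3 A B C) : PsdRank A ≤ k := by
  rw [psdRank_eq_sInf]
  exact Nat.sInf_le ⟨B, C, h⟩

omit [Fintype β] in
theorem exists_isPsdFactorization_of_nonneg {A : Matrix α β ℝ} (hA : ∀ i j, 0 ≤ A i j) :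
    ∃ B C, IsPsdFactorization_s3 (k := Fintype.card α) A B C := by
  let e := Fintype.equivFin α
  refine ⟨fun i => diagonal (Pi.single (e i) 1), fun j => diagonal fun x => A (e.symm x) j,
    ⟨fun i => posSemidef_diagonal_iff.mpr fun x => ?_,
      fun j => posSemidef_diagonal_iff.mpr fun x => hA _ _, fun i j => ?_⟩⟩
  · rcases eq_or_ne x (e i) with rfl | hx <;> simp [*]
  · simp [diagonal_mul_diagonal, trace_diagonal, Pi.single_apply, ite_mul]

theorem exists_isPsdFactorization_psdRank {A : Matrix α β ℝ} (hA : ∀ i j, 0 ≤ A i j) :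
    ∃ B C, IsPsdFactorization_s3 (k := PsdRank A) A B C := by
  rw [psdRank_eq_sInf]
  exact Nat.sInf_mem (s := {k | ∃ B C, IsPsdFactorization_s3 (k := k) A B C})
    ⟨_, exists_isPsdFactorization_of_nonneg hA⟩

theorem psdRank_transpose (A : Matrix α β ℝ) : PsdRank Aᵀ = PsdRank A := by
  simp only [psdRank_eq_sInf]
  congr 1
  ext k
  exact ⟨fun ⟨B, C, h⟩ => ⟨C, B, h.transpose⟩, fun ⟨B, C, h⟩ => ⟨C, B, h.transpose⟩⟩

/-- With `U` an orthonormal basis of `V` as columns, `U * Uᴴ` is the orthogonal projection onto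
`V`; it fixes every `P i`, so conjugating all factors by `U` does not change the traces. -/
theorem IsPsdFactorization_s3.psdRank_le_finrank {k : ℕ} {A : Matrix α β ℝ}
    {P : α → Matrix (Fin k) (Fin k) ℝ} {Q : β → Matrix (Fin k) (Fin k) ℝ}
    (h : IsPsdFactorization_s3 A P Q) {V : Submodule ℝ (EuclideanSpace ℝ (Fin k))}
    (hPV : ∀ i, LinearMap.range (toEuclideanLin (P i)) ≤ V) :
    PsdRank A ≤ Module.finrank ℝ V := by
  obtain ⟨U, hU, hUV⟩ := V.exists_conjTranspose_mul_self_eq_one_and_range_eq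
  have hleft : ∀ i, U * Uᴴ * P i = P i :=
    fun i => mul_conjTranspose_mul_eq_self_of_range_le hU ((hPV i).trans hUV.ge)
  have hright : ∀ i, P i * (U * Uᴴ) = P i := fun i => by
    have := congrArg conjTranspose (hleft i)
    rwa [conjTranspose_mul, conjTranspose_mul, conjTranspose_conjTranspose,
      (h.posSemidef_left i).isHermitian.eq] at this
  refine IsPsdFactorization_s3.psdRank_le (B := fun i => Uᴴ * P i * U) (C := fun j => Uᴴ * Q j * U)
    ⟨fun i => (h.posSemidef_left i).conjTranspose_mul_mul_same U,
      fun j => (h.posSemidef_right j).conjTranspose_mul_mul_same U, fun i j => ?_⟩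
  calc A i j = (P i * Q j).trace := h.apply_eq_trace i j
    _ = (U * Uᴴ * (P i * Q j)).trace := by rw [← Matrix.mul_assoc, hleft]
    _ = (P i * (U * Uᴴ) * Q j * (U * Uᴴ)).trace := by rw [hright, trace_mul_comm]
    _ = (Uᴴ * P i * U * (Uᴴ * Q j * U)).trace := by
      simp only [Matrix.mul_assoc]
      rw [trace_mul_comm Uᴴ]
      simp only [Matrix.mul_assoc]

end PsdRank

theorem psdRank_fromBlocks_ge {m₁ n₁ m₂ n₂ : ℕ}
    (A : Matrix (Fin m₁) (Fin n₁) ℝ) (B : Matrix (Fin m₁) (Fin n₂) ℝ)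
    (C : Matrix (Fin m₂) (Fin n₂) ℝ)
    (hA : ∀ i j, 0 ≤ A i j) (hB : ∀ i j, 0 ≤ B i j) (hC : ∀ i j, 0 ≤ C i j) :
    PsdRank A + PsdRank C ≤ PsdRank (Matrix.fromBlocks A B 0 C) := by
  obtain ⟨P, Q, hM⟩ := exists_isPsdFactorization_psdRank (A := fromBlocks A B 0 C)
    (by rintro (i | i) (j | j) <;> simp [hA, hB, hC])
  let V := ⨆ j, LinearMap.range (toEuclideanLin (Q (.inl j)))
  have hPQ : ∀ i j, (P (.inr i))ᴴ * Q (.inl j) = 0 := fun i j => by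
    rw [(hM.posSemidef_left _).isHermitian.eq,
      ← (hM.posSemidef_left _).trace_mul_eq_zero_iff_s3 (hM.posSemidef_right _)]
    exact (hM.apply_eq_trace (.inr i) (.inl j)).symm
  have hArank : PsdRank A ≤ Module.finrank ℝ V := by
    rw [← psdRank_transpose]
    exact (hM.submatrix Sum.inl Sum.inl).transpose.psdRank_le_finrank
      fun j => le_iSup (fun j => LinearMap.range (toEuclideanLin (Q (.inl j)))) j
  have hCrank : PsdRank C ≤ Module.finrank ℝ Vᗮ :=
    (hM.submatrix Sum.inr Sum.inr).psdRank_le_finrank fun i =>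
      Submodule.isOrtho_iSup_right.mpr fun j => range_toEuclideanLin_isOrtho (hPQ i j)
  calc PsdRank A + PsdRank C ≤ Module.finrank ℝ V + Module.finrank ℝ Vᗮ :=
        add_le_add hArank hCrank
    _ = PsdRank (fromBlocks A B 0 C) := by
      rw [V.finrank_add_finrank_orthogonal, finrank_euclideanSpace_fin]
end

section
/- Let M be a nonnegative m×n matrix and suppose (A_i)_{i=1}^m and (B_j)_{j=1}^n are families of k×k real PSD matrices such that tr(A_i B_j) = M(i,j) for all i,j. Let d be the dimension of the linear span of all rows of all the matrices A_1,…,A_m. Then PSD rank(M) ≤ d. -/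
/-! Let `V` be the span of the rows of the `Aᵢ` and let `Q` be a `k × d` matrix whose columns form
an orthonormal basis of `V`, so that `P = Q Qᵀ` is the orthogonal projection onto `V`. Each `Aᵢ` is
symmetric with rows in `V`, hence `Aᵢ = P Aᵢ P`. The compressions `Qᵀ Aᵢ Q` and `Qᵀ Bⱼ Q` are `d × d`,
PSD by congruence, and by cyclicity of the trace
`tr (Qᵀ Aᵢ Q Qᵀ Bⱼ Q) = tr (P Aᵢ P Bⱼ) = tr (Aᵢ Bⱼ)`. -/

open Matrix

theorem psdRank_le_of_factorization {α β : Type} [Fintype α] [Fintype β] {M : Matrix α β ℝ}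
    {d : ℕ} (A : α → Matrix (Fin d) (Fin d) ℝ) (B : β → Matrix (Fin d) (Fin d) ℝ)
    (hA : ∀ i, (A i).PosSemidef) (hB : ∀ j, (B j).PosSemidef)
    (hM : ∀ i j, M i j = (A i * B j).trace) : PsdRank M ≤ d :=
  Nat.sInf_le ⟨A, B, hA, hB, hM⟩

theorem Submodule.exists_orthonormal_cols_range_mulVecLin_eq {ι : Type*} [Fintype ι]
    (V : Submodule ℝ (ι → ℝ)) :
    ∃ Q : Matrix ι (Fin (Module.finrank ℝ V)) ℝ, Qᵀ * Q = 1 ∧ LinearMap.range Q.mulVecLin = V := by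
  let e := WithLp.linearEquiv 2 ℝ (ι → ℝ)
  let W := V.map e.symm.toLinearMap
  let c : OrthonormalBasis (Fin (Module.finrank ℝ V)) ℝ W :=
    (stdOrthonormalBasis ℝ W).reindex (finCongr (LinearEquiv.finrank_map_eq e.symm V))
  let f : W →ₗ[ℝ] (ι → ℝ) := e.toLinearMap ∘ₗ W.subtype
  refine ⟨of fun t l => f (c l) t, ?_, ?_⟩
  · have hgram : gram ℝ (fun l => (c l : EuclideanSpace ℝ ι)) = 1 :=
      gram_eq_one_iff_orthonormal.mpr (c.orthonormal.comp_linearIsometry W.subtypeₗᵢ)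
    rw [gram_eq_conjTranspose_mul (EuclideanSpace.basisFun ι ℝ)] at hgram
    exact hgram
  · have hcols : Set.range (of fun t l => f (c l) t).col = f '' Set.range c := Set.range_comp f c
    rw [range_mulVecLin, hcols, Submodule.span_image, ← c.coe_toBasis, c.toBasis.span_eq,
      Submodule.map_comp, Submodule.map_subtype_top]
    exact (Submodule.map_symm_eq_iff e).mp rfl

theorem Matrix.PosSemidef.transpose_mul_mul_same {ι κ : Type*} [Fintype ι] [Fintype κ]
    {A : Matrix ι ι ℝ} (hA : A.PosSemidef) (Q : Matrix ι κ ℝ) : (Qᵀ * A * Q).PosSemidef := by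
  simpa only [conjTranspose_eq_transpose_of_trivial] using hA.conjTranspose_mul_mul_same Q

section Compression

variable {ι κ R : Type*} [Fintype ι] [Fintype κ] [CommRing R]

theorem Matrix.mul_transpose_mulVec_eq_self_of_mem_range [DecidableEq κ] {Q : Matrix ι κ R}
    (hQ : Qᵀ * Q = 1) {v : ι → R} (hv : v ∈ LinearMap.range Q.mulVecLin) :
    (Q * Qᵀ) *ᵥ v = v := by
  obtain ⟨c, rfl⟩ := hv
  rw [mulVecLin_apply, mulVec_mulVec, Matrix.mul_assoc, hQ, Matrix.mul_one]

theorem Matrix.mul_mul_transpose_eq_self [DecidableEq κ] {Q : Matrix ι κ R} (hQ : Qᵀ * Q = 1)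
    {A : Matrix ι ι R} (hA : ∀ t, A t ∈ LinearMap.range Q.mulVecLin) : A * (Q * Qᵀ) = A := by
  ext t s
  simpa [mulVec, dotProduct, mul_apply, mul_comm] using
    congrFun (mul_transpose_mulVec_eq_self_of_mem_range hQ (hA t)) s

theorem Matrix.trace_compress_mul_compress (Q : Matrix ι κ R) {A : Matrix ι ι R}
    (B : Matrix ι ι R) (hA : A.IsSymm) (hAQ : A * (Q * Qᵀ) = A) :
    (Qᵀ * A * Q * (Qᵀ * B * Q)).trace = (A * B).trace := by
  have hQA : Q * Qᵀ * A = A := by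
    simpa only [transpose_mul, transpose_transpose, hA.eq, Matrix.mul_assoc] using
      congrArg transpose hAQ
  calc (Qᵀ * A * Q * (Qᵀ * B * Q)).trace = (A * (Q * Qᵀ) * B * (Q * Qᵀ)).trace := by
        rw [Matrix.mul_assoc, Matrix.mul_assoc, trace_mul_comm]; simp only [Matrix.mul_assoc]
    _ = (Q * Qᵀ * A * B).trace := by rw [hAQ, trace_mul_comm]; simp only [Matrix.mul_assoc]
    _ = (A * B).trace := by rw [hQA]

end Compression

theorem psdRank_le_dim_span_rows_general {m n k : ℕ} (M : Matrix (Fin m) (Fin n) ℝ)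
    (A : Fin m → Matrix (Fin k) (Fin k) ℝ) (B : Fin n → Matrix (Fin k) (Fin k) ℝ)
    (hA : ∀ i, (A i).PosSemidef) (hB : ∀ j, (B j).PosSemidef)
    (hfact : ∀ i j, M i j = ((A i) * (B j)).trace) :
    PsdRank M ≤ Module.finrank ℝ
      (Submodule.span ℝ {r : Fin k → ℝ | ∃ i t, r = (A i) t}) := by
  set V := Submodule.span ℝ {r : Fin k → ℝ | ∃ i t, r = (A i) t}
  obtain ⟨Q, hQ, hQV⟩ := V.exists_orthonormal_cols_range_mulVecLin_eq
  have hAQ : ∀ i, A i * (Q * Qᵀ) = A i := fun i =>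
    mul_mul_transpose_eq_self hQ fun t => by
      rw [hQV]; exact Submodule.subset_span ⟨i, t, rfl⟩
  refine psdRank_le_of_factorization (fun i => Qᵀ * A i * Q) (fun j => Qᵀ * B j * Q)
    (fun i => (hA i).transpose_mul_mul_same Q) (fun j => (hB j).transpose_mul_mul_same Q)
    fun i j => ?_
  rw [hfact, trace_compress_mul_compress Q (B j) (isHermitian_iff_isSymm.mp (hA i).isHermitian)
    (hAQ i)]

theorem psdRank_le_dim_span_rows {m n k : ℕ} (M : Matrix (Fin m) (Fin n) ℝ)
    (hM : ∀ i j, 0 ≤ M i j)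
    (A : Fin m → Matrix (Fin k) (Fin k) ℝ) (B : Fin n → Matrix (Fin k) (Fin k) ℝ)
    (hA : ∀ i, (A i).PosSemidef) (hB : ∀ j, (B j).PosSemidef)
    (hfact : ∀ i j, M i j = ((A i) * (B j)).trace) :
    PsdRank M ≤ Module.finrank ℝ
      (Submodule.span ℝ {r : Fin k → ℝ | ∃ i t, r = (A i) t}) :=
  psdRank_le_dim_span_rows_general M A B hA hB hfact
end

section
/- For every α ∈ [0,4], the 3×3 matrix P(α) = [[α,1,1],[1,1,0],[1,0,1]] has PSD rank exactly 2. -/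
open Matrix

section PsdFactorization

variable {ι κ : Type} {A : Matrix ι κ ℝ} {k : ℕ}

def HasPsdFactorization (A : Matrix ι κ ℝ) (k : ℕ) : Prop :=
  ∃ (B : ι → Matrix (Fin k) (Fin k) ℝ) (C : κ → Matrix (Fin k) (Fin k) ℝ),
    (∀ i, (B i).PosSemidef) ∧ (∀ j, (C j).PosSemidef) ∧ ∀ i j, A i j = ((B i) * (C j)).trace

theorem psdRank_eq_of_hasPsdFactorization [Fintype ι] [Fintype κ] (h : HasPsdFactorization A k)
    (hmin : ∀ m < k, ¬ HasPsdFactorization A m) : PsdRank A = k :=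
  le_antisymm (Nat.sInf_le h) (le_csInf ⟨k, h⟩ fun m hm => not_lt.1 fun hlt => hmin m hlt hm)

-- In size at most one, `A i j = b i * c j` is an outer product.
theorem HasPsdFactorization.mul_eq_mul_of_le_one (h : HasPsdFactorization A k) (hk : k ≤ 1)
    (i i' : ι) (j j' : κ) : A i j * A i' j' = A i j' * A i' j := by
  obtain ⟨B, C, -, -, hBC⟩ := h
  simp only [hBC]
  interval_cases k
  · simp
  · simp only [trace_fin_one, mul_apply, Finset.univ_unique, Finset.sum_singleton]
    ring

end PsdFactorization

theorem posSemidef_fin_two {a b c : ℝ} (ha : 0 ≤ a) (hc : 0 ≤ c) (hb : b ^ 2 ≤ a * c) :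
    !![a, b; b, c].PosSemidef := by
  refine .of_dotProduct_mulVec_nonneg ?_ fun x => ?_
  · ext i j
    fin_cases i <;> fin_cases j <;> rfl
  simp only [dotProduct, mulVec, Fin.sum_univ_two, Pi.star_apply, star_trivial, of_apply,
    cons_val', cons_val_fin_one, cons_val_zero, cons_val_one]
  rcases ha.eq_or_lt with rfl | ha
  · obtain rfl : b = 0 := by nlinarith
    nlinarith [mul_nonneg hc (sq_nonneg (x 1))]
  · -- `a * Q(x) = (a x₀ + b x₁)² + (a c - b²) x₁²`
    refine nonneg_of_mul_nonneg_right ?_ ha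
    nlinarith [sq_nonneg (a * x 0 + b * x 1), mul_nonneg (sub_nonneg.2 hb) (sq_nonneg (x 1))]

/-- Take `Bⱼ = Cⱼ = Eⱼⱼ` for the last two rows and columns, `C₀` the all-ones matrix and `B₀` with
unit diagonal; then `tr (B₀ C₀) = 2 + 2 b`, forcing `b = (α - 2) / 2`, and `B₀` is PSD exactly
when `|b| ≤ 1`. -/
theorem hasPsdFactorization_two {α : ℝ} (hα : α ∈ Set.Icc (0 : ℝ) 4) :
    HasPsdFactorization !![α, 1, 1; 1, 1, 0; 1, 0, 1] 2 := by
  have hb : ((α - 2) / 2) ^ 2 ≤ 1 * 1 := by nlinarith [hα.1, hα.2]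
  refine ⟨![!![1, (α - 2) / 2; (α - 2) / 2, 1], !![1, 0; 0, 0], !![0, 0; 0, 1]],
    ![!![1, 1; 1, 1], !![1, 0; 0, 0], !![0, 0; 0, 1]], ?_, ?_, ?_⟩
  · intro i
    fin_cases i
    exacts [posSemidef_fin_two zero_le_one zero_le_one hb,
      posSemidef_fin_two zero_le_one le_rfl (by norm_num),
      posSemidef_fin_two le_rfl zero_le_one (by norm_num)]
  · intro j
    fin_cases j <;> exact posSemidef_fin_two (by norm_num) (by norm_num) (by norm_num)
  · intro i j
    fin_cases i <;> fin_cases j <;> simp [trace_fin_two]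
    ring

theorem psdRank_P_eq_two (α : ℝ) (hα : α ∈ Set.Icc (0 : ℝ) 4) :
    PsdRank !![α, 1, 1; 1, 1, 0; 1, 0, 1] = 2 := by
  refine psdRank_eq_of_hasPsdFactorization (hasPsdFactorization_two hα) fun m hm h => ?_
  have hminor := h.mul_eq_mul_of_le_one (by omega) 1 2 1 2
  simp at hminor
end

section
/- If vectors u_1, u_2 ∈ ℝ^3 are not collinear and two rows of a matrix C (obtained as tr(A_i B) with B = u_1u_1^⊤ + u_2u_2^⊤ + u_3u_3^⊤) both vanish, then those two rows of C, as functions given by rank-one PSD factors supported on the 1-dimensional orthogonal complement of span(u_1,u_2), are proportional. -/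
/-!
Since `tr(A_t B_k) = ∑ uᵢᵀ A_t uᵢ` is a sum of nonnegative terms, `C t k = 0` forces
`A_t u₁ = A_t u₂ = 0`. In `ℝ³` the vectors `u₁, u₂` span `v^⊥`, so `A_t` vanishes on `v^⊥`;
being symmetric, it then maps `v` into `span v`, and `A_t = α vvᵀ` with `α ≥ 0`. Hence every
such row of `C` is a multiple of `j ↦ tr(vvᵀ B_j)`.
-/

open Matrix

namespace Matrix

variable {n : Type*} [Fintype n]

theorem trace_mul_sum_vecMulVec {R ι : Type*} [CommSemiring R] [Fintype ι] (A : Matrix n n R)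
    (u : ι → n → R) :
    (A * ∑ i, vecMulVec (u i) (u i)).trace = ∑ i, u i ⬝ᵥ A *ᵥ u i := by
  simp only [Finset.mul_sum, trace_sum, mul_vecMulVec, trace_vecMulVec, dotProduct_comm]

theorem PosSemidef.mulVec_eq_zero_of_trace_mul_sum_vecMulVec_eq_zero {ι : Type*} [Fintype ι]
    {A : Matrix n n ℝ} (hA : A.PosSemidef) {u : ι → n → ℝ}
    (h : (A * ∑ i, vecMulVec (u i) (u i)).trace = 0) (i : ι) : A *ᵥ u i = 0 := by
  rw [trace_mul_sum_vecMulVec, Finset.sum_eq_zero_iff_of_nonneg] at h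
  · simpa using (hA.dotProduct_mulVec_zero_iff (u i)).mp (h i (Finset.mem_univ i))
  · simpa using fun i => hA.dotProduct_mulVec_nonneg (u i)

theorem IsHermitian.mulVec_eq_smul_of_orthogonal_le_ker {A : Matrix n n ℝ} (hA : A.IsHermitian)
    {v : n → ℝ} (hker : ∀ x, v ⬝ᵥ x = 0 → A *ᵥ x = 0) :
    A *ᵥ v = ((v ⬝ᵥ A *ᵥ v) / (v ⬝ᵥ v)) • v := by
  by_cases hvv : v ⬝ᵥ v = 0
  · simp [hker v hvv, hvv]
  set w := A *ᵥ v - ((v ⬝ᵥ A *ᵥ v) / (v ⬝ᵥ v)) • v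
  have hvw : v ⬝ᵥ w = 0 := by
    simp only [w, dotProduct_sub, dotProduct_smul, smul_eq_mul, div_mul_cancel₀ _ hvv, sub_self]
  have hwAv : w ⬝ᵥ A *ᵥ v = 0 := by
    rw [dotProduct_mulVec, ← mulVec_transpose, ← conjTranspose_eq_transpose_of_trivial, hA.eq,
      hker w hvw, zero_dotProduct]
  have hww : w ⬝ᵥ w = 0 :=
    calc w ⬝ᵥ w = w ⬝ᵥ A *ᵥ v - (v ⬝ᵥ A *ᵥ v) / (v ⬝ᵥ v) * (v ⬝ᵥ w) := by
          rw [dotProduct_comm v w, ← smul_eq_mul, ← dotProduct_smul, ← dotProduct_sub]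
      _ = 0 := by rw [hwAv, hvw, mul_zero, sub_zero]
  exact sub_eq_zero.mp (dotProduct_self_eq_zero.mp hww)

theorem mulVec_eq_smul_mulVec_of_orthogonal_le_ker {A : Matrix n n ℝ} {v : n → ℝ}
    (hker : ∀ x, v ⬝ᵥ x = 0 → A *ᵥ x = 0) (x : n → ℝ) :
    A *ᵥ x = ((v ⬝ᵥ x) / (v ⬝ᵥ v)) • A *ᵥ v := by
  by_cases hvv : v ⬝ᵥ v = 0
  · simp [hker x (by simp [dotProduct_self_eq_zero.mp hvv]), hvv]
  have hx : v ⬝ᵥ (x - ((v ⬝ᵥ x) / (v ⬝ᵥ v)) • v) = 0 := by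
    simp only [dotProduct_sub, dotProduct_smul, smul_eq_mul, div_mul_cancel₀ _ hvv, sub_self]
  simpa [mulVec_sub, mulVec_smul, sub_eq_zero] using hker _ hx

theorem PosSemidef.eq_smul_vecMulVec_of_orthogonal_le_ker {A : Matrix n n ℝ} (hA : A.PosSemidef)
    {v : n → ℝ} (hker : ∀ x, v ⬝ᵥ x = 0 → A *ᵥ x = 0) :
    ∃ α : ℝ, 0 ≤ α ∧ A = α • vecMulVec v v := by
  set c := (v ⬝ᵥ A *ᵥ v) / (v ⬝ᵥ v)
  have hAv : A *ᵥ v = c • v := hA.1.mulVec_eq_smul_of_orthogonal_le_ker hker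
  have hvv : 0 ≤ v ⬝ᵥ v := by simpa using dotProduct_self_star_nonneg v
  have hc : 0 ≤ c := div_nonneg (by simpa using hA.dotProduct_mulVec_nonneg v) hvv
  refine ⟨c / (v ⬝ᵥ v), div_nonneg hc hvv, ext_iff_mulVec.mpr fun x => ?_⟩
  rw [mulVec_eq_smul_mulVec_of_orthogonal_le_ker hker, hAv, smul_mulVec, vecMulVec_mulVec,
    op_smul_eq_smul, smul_smul, smul_smul]
  congr 1
  ring

end Matrix

theorem mem_span_pair_of_dotProduct_eq_zero {u₁ u₂ v x : Fin 3 → ℝ}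
    (hind : LinearIndependent ℝ ![u₁, u₂]) (hv : v ≠ 0)
    (hv₁ : v ⬝ᵥ u₁ = 0) (hv₂ : v ⬝ᵥ u₂ = 0) (hx : v ⬝ᵥ x = 0) :
    x ∈ Submodule.span ℝ {u₁, u₂} := by
  have hvv : v ⬝ᵥ v ≠ 0 := fun h => hv (dotProduct_self_eq_zero.mp h)
  have hspan : Submodule.span ℝ {u₁, u₂} ≤ LinearMap.ker (dotProductBilin ℝ ℝ v) :=
    Submodule.span_le.mpr (by simp [Set.insert_subset_iff, hv₁, hv₂])
  have hind3 : LinearIndependent ℝ ![v, u₁, u₂] :=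
    hind.finCons fun h =>
      hv (dotProduct_self_eq_zero.mp (hspan (by simpa [Set.pair_comm] using h)))
  obtain ⟨c, hc⟩ := Submodule.mem_span_range_iff_exists_fun ℝ |>.mp
    ((hind3.span_eq_top_of_card_eq_finrank (by simp)).ge (Submodule.mem_top (x := x)))
  simp only [Fin.sum_univ_three, cons_val_zero, cons_val_one, cons_val_two, tail_cons,
    head_cons] at hc
  have hc₀ : c 0 = 0 := by
    have := congrArg (v ⬝ᵥ ·) hc
    simp only [dotProduct_add, dotProduct_smul, hv₁, hv₂, hx, smul_eq_mul, mul_zero,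
      add_zero] at this
    exact (mul_eq_zero.mp this).resolve_right hvv
  rw [hc₀, zero_smul, zero_add] at hc
  exact Submodule.mem_span_pair.mpr ⟨c 1, c 2, hc⟩

theorem rows_vanishing_at_high_rank_column_are_collinear_general {m n : ℕ}
    (A : Fin m → Matrix (Fin 3) (Fin 3) ℝ) (B : Fin n → Matrix (Fin 3) (Fin 3) ℝ)
    (hA : ∀ i, (A i).PosSemidef)
    (C : Matrix (Fin m) (Fin n) ℝ) (hC : ∀ i j, C i j = ((A i) * (B j)).trace)
    (k : Fin n) (u₁ u₂ u₃ v : Fin 3 → ℝ)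
    (hBk : B k = vecMulVec u₁ u₁ + vecMulVec u₂ u₂ + vecMulVec u₃ u₃)
    (hind : LinearIndependent ℝ ![u₁, u₂])
    (hv : v ≠ 0) (hv₁ : v ⬝ᵥ u₁ = 0) (hv₂ : v ⬝ᵥ u₂ = 0) :
    (∀ t, C t k = 0 → ∃ α : ℝ, 0 ≤ α ∧ A t = α • vecMulVec v v) ∧
    (∀ t₁ t₂, C t₁ k = 0 → C t₂ k = 0 →
      ∃ c d : ℝ, (c ≠ 0 ∨ d ≠ 0) ∧ ∀ j, c * C t₁ j = d * C t₂ j) := by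
  have hBk_sum : B k = ∑ i, vecMulVec (![u₁, u₂, u₃] i) (![u₁, u₂, u₃] i) := by
    simp [Fin.sum_univ_three, hBk]
  have hsupp : ∀ t, C t k = 0 → ∃ α : ℝ, 0 ≤ α ∧ A t = α • vecMulVec v v := by
    intro t ht
    rw [hC, hBk_sum] at ht
    have hker := (hA t).mulVec_eq_zero_of_trace_mul_sum_vecMulVec_eq_zero ht
    refine (hA t).eq_smul_vecMulVec_of_orthogonal_le_ker fun x hx => ?_
    obtain ⟨a, b, rfl⟩ := Submodule.mem_span_pair.mp
      (mem_span_pair_of_dotProduct_eq_zero hind hv hv₁ hv₂ hx)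
    simpa [mulVec_add, mulVec_smul] using congrArg₂ (a • · + b • ·) (hker 0) (hker 1)
  have hrow : ∀ t α, A t = α • vecMulVec v v → ∀ j, C t j = α * (vecMulVec v v * B j).trace := by
    intro t α hAt j
    rw [hC, hAt, smul_mul_assoc, trace_smul, smul_eq_mul]
  refine ⟨hsupp, fun t₁ t₂ h₁ h₂ => ?_⟩
  obtain ⟨α₁, -, hA₁⟩ := hsupp t₁ h₁
  obtain ⟨α₂, -, hA₂⟩ := hsupp t₂ h₂
  by_cases hα₁ : α₁ = 0
  · exact ⟨1, 0, Or.inl one_ne_zero, fun j => by simp [hrow t₁ α₁ hA₁, hα₁]⟩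
  · exact ⟨α₂, α₁, Or.inr hα₁, fun j => by rw [hrow t₁ α₁ hA₁, hrow t₂ α₂ hA₂]; ring⟩

theorem rows_vanishing_at_high_rank_column_are_collinear {m n : ℕ}
    (A : Fin m → Matrix (Fin 3) (Fin 3) ℝ) (B : Fin n → Matrix (Fin 3) (Fin 3) ℝ)
    (hA : ∀ i, (A i).PosSemidef) (hB : ∀ j, (B j).PosSemidef)
    (C : Matrix (Fin m) (Fin n) ℝ) (hC : ∀ i j, C i j = ((A i) * (B j)).trace)
    (k : Fin n) (u₁ u₂ u₃ v : Fin 3 → ℝ)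
    (hBk : B k = vecMulVec u₁ u₁ + vecMulVec u₂ u₂ + vecMulVec u₃ u₃)
    (hind : LinearIndependent ℝ ![u₁, u₂])
    (hv : v ≠ 0) (hv₁ : v ⬝ᵥ u₁ = 0) (hv₂ : v ⬝ᵥ u₂ = 0) :
    (∀ t, C t k = 0 → ∃ α : ℝ, 0 ≤ α ∧ A t = α • vecMulVec v v) ∧
    (∀ t₁ t₂, C t₁ k = 0 → C t₂ k = 0 →
      ∃ c d : ℝ, (c ≠ 0 ∨ d ≠ 0) ∧ ∀ j, c * C t₁ j = d * C t₂ j) :=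
  rows_vanishing_at_high_rank_column_are_collinear_general A B hA C hC k u₁ u₂ u₃ v hBk hind hv hv₁
    hv₂
end
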